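/- Assume p acts as a nonzerodivisor on both L₁ and L₂ and that r₁ is surjective. Let r_L : L → L₂/pL₂ be the composite of the projection (x,y) ↦ y with the quotient map L₂ → L₂/pL₂. Then Ker(r_L) = {(x,0) : x ∈ Ker(r₁)} + pL as submodules of L, and there is an isomorphism of A-modules Ker(r_L)/p·Ker(r_L) ≅ Ker(r₁)/p·Ker(r₁) ⊕ pL₂/p²L₂. -/
import Mathlib


set_option maxSynthPendingDepth 3

/-- The fiber product (glued module) of two module maps `r₁ : L₁ → W`, `r₂ : L₂ → W`,
i.e. `L = {(x,y) ∈ L₁ ⊕ L₂ : r₁(x) = r₂(y)}` as a submodule of `L₁ × L₂`. -/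
def gluedModule {A : Type*} [Ring A] {L₁ L₂ W : Type*}
    [AddCommGroup L₁] [AddCommGroup L₂] [AddCommGroup W]
    [Module A L₁] [Module A L₂] [Module A W]
    (r₁ : L₁ →ₗ[A] W) (r₂ : L₂ →ₗ[A] W) : Submodule A (L₁ × L₂) where
  carrier := {z | r₁ z.1 = r₂ z.2}
  add_mem' := by
    intro a b ha hb
    simp only [Set.mem_setOf_eq, Prod.fst_add, Prod.snd_add, map_add] at *
    rw [ha, hb]
  zero_mem' := by simp
  smul_mem' := by
    intro c a ha
    simp only [Set.mem_setOf_eq, Prod.smul_fst, Prod.smul_snd, map_smul] at *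
    rw [ha]

/-- The submodule `p·M` of all multiples of `p` in a module `M`
(the submodule generated by the elements `p • x`). -/
def pMul {A : Type*} [Ring A] (p : A) (M : Type*) [AddCommGroup M] [Module A M] :
    Submodule A M :=
  Submodule.span A {y : M | ∃ x : M, y = p • x}

/-- Multiplication by a central element `p`, as a linear map. -/
def pSmulHom {A : Type*} [Ring A] (p : A) (hp : ∀ a : A, p * a = a * p)
    (M : Type*) [AddCommGroup M] [Module A M] : M →ₗ[A] M where
  toFun x := p • x
  map_add' := smul_add p
  map_smul' a x := by
    simp only [RingHom.id_apply]
    rw [smul_smul, smul_smul, hp a]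

lemma pMul_eq_range {A : Type*} [Ring A] (p : A) (hp : ∀ a : A, p * a = a * p)
    (M : Type*) [AddCommGroup M] [Module A M] :
    pMul p M = LinearMap.range (pSmulHom p hp M) := by
  apply le_antisymm
  · rw [pMul, Submodule.span_le]
    rintro y ⟨x, rfl⟩
    exact ⟨x, rfl⟩
  · rintro y ⟨x, rfl⟩
    exact Submodule.subset_span ⟨x, rfl⟩

lemma mem_pMul {A : Type*} [Ring A] (p : A) (hp : ∀ a : A, p * a = a * p)
    {M : Type*} [AddCommGroup M] [Module A M] {y : M} :
    y ∈ pMul p M ↔ ∃ x : M, y = p • x := by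
  rw [pMul_eq_range p hp M]
  constructor
  · rintro ⟨x, rfl⟩; exact ⟨x, rfl⟩
  · rintro ⟨x, rfl⟩; exact ⟨x, rfl⟩

lemma pMul_smul_mem {A : Type*} [Ring A] (p : A)
    {M : Type*} [AddCommGroup M] [Module A M] (x : M) : p • x ∈ pMul p M :=
  Submodule.subset_span ⟨x, rfl⟩

/-- Assume `p` acts as a nonzerodivisor on both `L₁` and `L₂` and that
`r₁` is surjective.  Let `r_L : L → L₂/pL₂` be the composite of the projection
`(x,y) ↦ y` with the quotient map `L₂ → L₂/pL₂`.  Then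
`Ker(r_L) = {(x,0) : x ∈ Ker(r₁)} + pL` as submodules of `L`, and there is an isomorphism
of `A`-modules `Ker(r_L)/p·Ker(r_L) ≅ Ker(r₁)/p·Ker(r₁) ⊕ pL₂/p²L₂`. -/
theorem statement2 {A : Type*} [Ring A] (p : A) (hp : ∀ a : A, p * a = a * p)
    {L₁ L₂ W : Type*} [AddCommGroup L₁] [AddCommGroup L₂] [AddCommGroup W]
    [Module A L₁] [Module A L₂] [Module A W]
    (r₁ : L₁ →ₗ[A] W) (r₂ : L₂ →ₗ[A] W)
    (hreg₁ : ∀ y : L₁, p • y = 0 → y = 0)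
    (hreg₂ : ∀ y : L₂, p • y = 0 → y = 0)
    (hsurj : Function.Surjective r₁) :
    LinearMap.ker ((pMul p L₂).mkQ.comp
        ((LinearMap.snd A L₁ L₂).comp (gluedModule r₁ r₂).subtype)) =
      Submodule.comap (gluedModule r₁ r₂).subtype ((LinearMap.ker r₁).prod ⊥) ⊔
        pMul p ↥(gluedModule r₁ r₂) ∧
    Nonempty
      ((↥(LinearMap.ker ((pMul p L₂).mkQ.comp
            ((LinearMap.snd A L₁ L₂).comp (gluedModule r₁ r₂).subtype))) ⧸
          pMul p ↥(LinearMap.ker ((pMul p L₂).mkQ.comp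
            ((LinearMap.snd A L₁ L₂).comp (gluedModule r₁ r₂).subtype)))) ≃ₗ[A]
        ((↥(LinearMap.ker r₁) ⧸ pMul p ↥(LinearMap.ker r₁)) ×
          (↥(pMul p L₂) ⧸
            Submodule.comap (pMul p L₂).subtype (pMul (p * p) L₂)))) := by
  classical
  set Lg := gluedModule r₁ r₂ with hLgdef
  set N := LinearMap.ker ((pMul p L₂).mkQ.comp
      ((LinearMap.snd A L₁ L₂).comp Lg.subtype)) with hNdef
  have memL : ∀ z : L₁ × L₂, z ∈ Lg ↔ r₁ z.1 = r₂ z.2 := fun z => Iff.rfl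
  have memN : ∀ z : ↥Lg, z ∈ N ↔ (z : L₁ × L₂).2 ∈ pMul p L₂ := by
    intro z
    simp [hNdef, LinearMap.mem_ker, Submodule.Quotient.mk_eq_zero]
  constructor
  · -- Part 1
    apply le_antisymm
    · intro z hz
      obtain ⟨y', hy'⟩ := (mem_pMul p hp).1 ((memN z).1 hz)
      obtain ⟨x', hx'⟩ := hsurj (r₂ y')
      have hw : ((x', y') : L₁ × L₂) ∈ Lg := hx'
      set w : ↥Lg := ⟨(x', y'), hw⟩ with hwdef
      have hz2 : z - p • w ∈
          Submodule.comap Lg.subtype ((LinearMap.ker r₁).prod ⊥) := by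
        refine Submodule.mem_comap.2 (Submodule.mem_prod.2 ⟨?_, ?_⟩)
        · have h1 : r₁ (z : L₁ × L₂).1 = r₂ (z : L₁ × L₂).2 := z.2
          have : ((Lg.subtype) (z - p • w)).1 = (z : L₁ × L₂).1 - p • x' := by
            simp [hwdef]
          rw [LinearMap.mem_ker, this, map_sub, map_smul, hx', h1, hy',
            ← map_smul, sub_self]
        · have : ((Lg.subtype) (z - p • w)).2 = (z : L₁ × L₂).2 - p • y' := by
            simp [hwdef]
          rw [this, hy', sub_self]
          exact Submodule.mem_bot A |>.2 rfl
      have hzz : z = (z - p • w) + p • w := by abel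
      rw [hzz]
      exact Submodule.add_mem_sup hz2 (pMul_smul_mem p w)
    · apply sup_le
      · intro z hz
        rw [memN]
        have h2 := (Submodule.mem_prod.1 (Submodule.mem_comap.1 hz)).2
        rw [Submodule.mem_bot] at h2
        rw [show ((z : L₁ × L₂)).2 = (Lg.subtype z).2 from rfl, h2]
        exact Submodule.zero_mem _
      · intro z hz
        obtain ⟨m, rfl⟩ := (mem_pMul p hp).1 hz
        rw [memN]
        have : ((p • m : ↥Lg) : L₁ × L₂).2 = p • (m : L₁ × L₂).2 := rfl
        rw [this]
        exact pMul_smul_mem p _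
  · -- Part 2
    have hp2 : ∀ a : A, (p * p) * a = a * (p * p) := by
      intro a
      rw [mul_assoc, hp a, ← mul_assoc, hp a, mul_assoc]
    -- choice functions
    have hPy : ∀ y : ↥(pMul p L₂), ∃ y' : L₂, (y : L₂) = p • y' :=
      fun y => (mem_pMul p hp).1 y.2
    set yD : ↥(pMul p L₂) → L₂ := fun y => (hPy y).choose with hyDdef
    have hyD : ∀ y : ↥(pMul p L₂), (y : L₂) = p • yD y := fun y => (hPy y).choose_spec
    set xD : ↥(pMul p L₂) → L₁ := fun y => (hsurj (r₂ (yD y))).choose with hxDdef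
    have hxD : ∀ y : ↥(pMul p L₂), r₁ (xD y) = r₂ (yD y) :=
      fun y => (hsurj (r₂ (yD y))).choose_spec
    -- the section element
    have hmemL : ∀ (x : ↥(LinearMap.ker r₁)) (y : ↥(pMul p L₂)),
        (((x : L₁) + p • xD y, (y : L₂)) : L₁ × L₂) ∈ Lg := by
      intro x y
      have hx0 : r₁ (x : L₁) = 0 := x.2
      show r₁ ((x : L₁) + p • xD y) = r₂ (y : L₂)
      rw [map_add, map_smul, hx0, zero_add, hxD, ← map_smul, ← hyD]
    set t : ↥(LinearMap.ker r₁) × ↥(pMul p L₂) → ↥N := fun z =>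
      ⟨⟨((z.1 : L₁) + p • xD z.2, (z.2 : L₂)), hmemL z.1 z.2⟩,
        (memN _).2 z.2.2⟩ with htdef
    have htval : ∀ z : ↥(LinearMap.ker r₁) × ↥(pMul p L₂),
        ((t z : ↥Lg) : L₁ × L₂) = ((z.1 : L₁) + p • xD z.2, (z.2 : L₂)) :=
      fun z => rfl
    -- uniqueness of yD on sums / smuls
    have hyD_add : ∀ y₁ y₂ : ↥(pMul p L₂), yD (y₁ + y₂) = yD y₁ + yD y₂ := by
      intro y₁ y₂
      have h0 : p • (yD (y₁ + y₂) - (yD y₁ + yD y₂)) = 0 := by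
        rw [smul_sub, smul_add, ← hyD, ← hyD, ← hyD, Submodule.coe_add, sub_self]
      exact sub_eq_zero.1 (hreg₂ _ h0)
    have hyD_smul : ∀ (a : A) (y : ↥(pMul p L₂)), yD (a • y) = a • yD y := by
      intro a y
      have h0 : p • (yD (a • y) - a • yD y) = 0 := by
        rw [smul_sub, ← hyD, smul_smul, hp a, ← smul_smul, ← hyD y,
          Submodule.coe_smul, sub_self]
      exact sub_eq_zero.1 (hreg₂ _ h0)
    -- helper for membership of "(d,0)" elements in N
    have hd_mem : ∀ d : L₁, r₁ d = 0 → ∃ m : ↥N, ((m : ↥Lg) : L₁ × L₂) = (d, 0) := by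
      intro d hd
      have h1 : ((d, (0 : L₂)) : L₁ × L₂) ∈ Lg := by
        show r₁ d = r₂ 0
        rw [hd, map_zero]
      exact ⟨⟨⟨(d, 0), h1⟩, (memN _).2 (Submodule.zero_mem _)⟩, rfl⟩
    -- the linear map θ
    have hadd : ∀ z w : ↥(LinearMap.ker r₁) × ↥(pMul p L₂),
        (Submodule.Quotient.mk (t (z + w)) : ↥N ⧸ pMul p ↥N) =
          Submodule.Quotient.mk (t z) + Submodule.Quotient.mk (t w) := by
      intro z w
      rw [← Submodule.Quotient.mk_add, Submodule.Quotient.eq]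
      have hr : r₁ (xD (z.2 + w.2) - xD z.2 - xD w.2) = 0 := by
        rw [map_sub, map_sub, hxD, hxD, hxD, hyD_add, map_add]
        abel
      obtain ⟨m, hm⟩ := hd_mem _ hr
      refine (mem_pMul p hp).2 ⟨m, ?_⟩
      apply Subtype.ext
      apply Subtype.ext
      have hL : ((↑(↑(t (z + w) - (t z + t w)) : ↥Lg) : L₁ × L₂)) =
          ((t (z+w) : ↥Lg) : L₁ × L₂) - ((t z : ↥Lg) : L₁ × L₂) -
            ((t w : ↥Lg) : L₁ × L₂) := by
        push_cast
        abel
      have hR : ((↑(↑(p • m) : ↥Lg) : L₁ × L₂)) = p • ((m : ↥Lg) : L₁ × L₂) := rfl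
      rw [hL, hR, hm, htval, htval, htval]
      ext
      · simp only [Prod.fst_sub, Prod.smul_fst, Prod.fst_add, Prod.snd_add,
          Submodule.coe_add, smul_sub, smul_add, smul_zero]
        abel
      · simp only [Prod.snd_sub, Prod.smul_snd, Prod.fst_add, Prod.snd_add,
          Submodule.coe_add, smul_zero]
        abel
    have hsmul : ∀ (a : A) (z : ↥(LinearMap.ker r₁) × ↥(pMul p L₂)),
        (Submodule.Quotient.mk (t (a • z)) : ↥N ⧸ pMul p ↥N) =
          a • Submodule.Quotient.mk (t z) := by
      intro a z
      rw [← Submodule.Quotient.mk_smul, Submodule.Quotient.eq]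
      have hr : r₁ (xD (a • z.2) - a • xD z.2) = 0 := by
        rw [map_sub, hxD, hyD_smul, map_smul, map_smul, hxD, sub_self]
      obtain ⟨m, hm⟩ := hd_mem _ hr
      refine (mem_pMul p hp).2 ⟨m, ?_⟩
      apply Subtype.ext
      apply Subtype.ext
      have hL : ((↑(↑(t (a • z) - a • t z) : ↥Lg) : L₁ × L₂)) =
          ((t (a • z) : ↥Lg) : L₁ × L₂) - a • ((t z : ↥Lg) : L₁ × L₂) := by
        push_cast
        rfl
      have hR : ((↑(↑(p • m) : ↥Lg) : L₁ × L₂)) = p • ((m : ↥Lg) : L₁ × L₂) := rfl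
      rw [hL, hR, hm, htval, htval]
      ext
      · simp only [Prod.fst_sub, Prod.smul_fst, Prod.fst_add, Prod.snd_add,
          Submodule.coe_smul, smul_sub, smul_add, smul_zero]
        rw [smul_smul p a, hp a, ← smul_smul a p]
        abel
      · simp only [Prod.snd_sub, Prod.smul_snd, Prod.fst_add, Prod.snd_add,
          Submodule.coe_smul, smul_zero]
        abel
    set θ : (↥(LinearMap.ker r₁) × ↥(pMul p L₂)) →ₗ[A] (↥N ⧸ pMul p ↥N) :=
      { toFun := fun z => Submodule.Quotient.mk (t z)
        map_add' := hadd
        map_smul' := fun a z => by simpa using hsmul a z } with hθdef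
    -- surjectivity of θ
    have hθsurj : Function.Surjective θ := by
      intro q
      obtain ⟨n, rfl⟩ := Submodule.Quotient.mk_surjective _ q
      set y : ↥(pMul p L₂) := ⟨((n : ↥Lg) : L₁ × L₂).2, (memN (n : ↥Lg)).1 n.2⟩
        with hydef
      have hxk : r₁ (((n : ↥Lg) : L₁ × L₂).1 - p • xD y) = 0 := by
        have h1 : r₁ ((n : ↥Lg) : L₁ × L₂).1 = r₂ ((n : ↥Lg) : L₁ × L₂).2 :=
          (n : ↥Lg).2
        rw [map_sub, map_smul, hxD, h1, ← map_smul, ← hyD]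
        simp [hydef]
      refine ⟨(⟨_, LinearMap.mem_ker.2 hxk⟩, y), ?_⟩
      show Submodule.Quotient.mk (t _) = Submodule.Quotient.mk n
      congr 1
      apply Subtype.ext
      apply Subtype.ext
      rw [htval]
      ext
      · show (((n : ↥Lg) : L₁ × L₂).1 - p • xD y) + p • xD y = _
        abel
      · rfl
    -- kernel of θ
    have hθker : LinearMap.ker θ = (pMul p ↥(LinearMap.ker r₁)).prod
        (Submodule.comap (pMul p L₂).subtype (pMul (p * p) L₂)) := by
      apply le_antisymm
      · intro z hz
        have hz0 : t z ∈ pMul p ↥N := by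
          rw [← Submodule.Quotient.mk_eq_zero]
          exact hz
        obtain ⟨m, hm⟩ := (mem_pMul p hp).1 hz0
        have hm2P : ((m : ↥Lg) : L₁ × L₂).2 ∈ pMul p L₂ := (memN (m : ↥Lg)).1 m.2
        obtain ⟨m₂', hm₂'⟩ := (mem_pMul p hp).1 hm2P
        have hcoord : ((z.1 : L₁) + p • xD z.2, (z.2 : L₂)) =
            p • ((m : ↥Lg) : L₁ × L₂) := by
          rw [← htval z, hm]; rfl
        have hc1 : (z.1 : L₁) + p • xD z.2 = p • ((m : ↥Lg) : L₁ × L₂).1 :=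
          congrArg Prod.fst hcoord
        have hc2 : (z.2 : L₂) = p • ((m : ↥Lg) : L₁ × L₂).2 :=
          congrArg Prod.snd hcoord
        have hy2 : (z.2 : L₂) = (p * p) • m₂' := by
          rw [hc2, hm₂', smul_smul]
        refine Submodule.mem_prod.2 ⟨?_, ?_⟩
        · -- z.1 ∈ pMul p (ker r₁)
          have hyDz : yD z.2 = p • m₂' := by
            apply sub_eq_zero.1
            apply hreg₂
            rw [smul_sub, ← hyD, hy2, smul_smul, sub_self]
          have hk : r₁ (((m : ↥Lg) : L₁ × L₂).1 - xD z.2) = 0 := by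
            have h1 : r₁ ((m : ↥Lg) : L₁ × L₂).1 = r₂ ((m : ↥Lg) : L₁ × L₂).2 :=
              (m : ↥Lg).2
            rw [map_sub, h1, hm₂', hxD, hyDz, sub_self]
          refine (mem_pMul p hp).2 ⟨⟨_, LinearMap.mem_ker.2 hk⟩, ?_⟩
          apply Subtype.ext
          show (z.1 : L₁) = p • (((m : ↥Lg) : L₁ × L₂).1 - xD z.2)
          rw [smul_sub, ← hc1]
          abel
        · exact Submodule.mem_comap.2 ((mem_pMul (p * p) hp2).2 ⟨m₂', hy2⟩)
      · rintro ⟨z1, z2⟩ hz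
        obtain ⟨hz1, hz2⟩ := Submodule.mem_prod.1 hz
        obtain ⟨k, hk⟩ := (mem_pMul p hp).1 hz1
        obtain ⟨y'', hy''⟩ := (mem_pMul (p * p) hp2).1 (Submodule.mem_comap.1 hz2)
        have hy2' : (z2 : L₂) = (p * p) • y'' := hy''
        have hyDz : yD z2 = p • y'' := by
          apply sub_eq_zero.1
          apply hreg₂
          rw [smul_sub, ← hyD, hy2', mul_smul, sub_self]
        have hk0 : r₁ (k : L₁) = 0 := k.2
        have hmL : (((k : L₁) + xD z2, p • y'') : L₁ × L₂) ∈ Lg := by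
          show r₁ ((k : L₁) + xD z2) = r₂ (p • y'')
          rw [map_add, hk0, zero_add, hxD, hyDz]
        set m : ↥N := ⟨⟨((k : L₁) + xD z2, p • y''), hmL⟩,
          (memN _).2 (pMul_smul_mem p y'')⟩ with hmdef
        have hz1c : (z1 : L₁) = p • (k : L₁) := congrArg Subtype.val hk
        rw [LinearMap.mem_ker]
        show (Submodule.Quotient.mk (t (z1, z2)) : ↥N ⧸ pMul p ↥N) = 0
        rw [Submodule.Quotient.mk_eq_zero]
        refine (mem_pMul p hp).2 ⟨m, ?_⟩
        apply Subtype.ext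
        apply Subtype.ext
        rw [show ((↑(p • m) : ↥Lg) : L₁ × L₂) = p • ((m : ↥Lg) : L₁ × L₂) from rfl,
          htval]
        ext
        · show (z1 : L₁) + p • xD z2 = p • ((k : L₁) + xD z2)
          rw [smul_add, hz1c]
        · show (z2 : L₂) = p • (p • y'')
          rw [hy2', mul_smul]
    -- assemble the isomorphism
    refine ⟨?_⟩
    set Q := Submodule.comap (pMul p L₂).subtype (pMul (p * p) L₂) with hQdef
    set π : (↥(LinearMap.ker r₁) × ↥(pMul p L₂)) →ₗ[A]
        ((↥(LinearMap.ker r₁) ⧸ pMul p ↥(LinearMap.ker r₁)) × (↥(pMul p L₂) ⧸ Q)) :=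
      (pMul p ↥(LinearMap.ker r₁)).mkQ.prodMap Q.mkQ with hπdef
    have hπsurj : Function.Surjective π := by
      rw [hπdef, LinearMap.coe_prodMap]
      exact (Submodule.mkQ_surjective _).prodMap (Submodule.mkQ_surjective _)
    have hπker : LinearMap.ker π = (pMul p ↥(LinearMap.ker r₁)).prod Q := by
      rw [hπdef, LinearMap.ker_prodMap, Submodule.ker_mkQ, Submodule.ker_mkQ]
    exact ((θ.quotKerEquivOfSurjective hθsurj).symm.trans
      (Submodule.quotEquivOfEq _ _ (hθker.trans hπker.symm))).trans
      (π.quotKerEquivOfSurjective hπsurj)
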